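/- arXiv:2206.06700 — 5 statements merged into one kernel-verified Lean document; each statement's English description precedes it below -/
import Mathlib

section
/- Let H be a complex inner product space (Hilbert space), let u, v ∈ H be unit vectors, and let O be a continuous linear operator on H such that both O and Id − O are positive (i.e. 0 ≤ O ≤ I). Set y = Re⟨u, O u⟩ and z = |⟨v, u⟩|². Then Re⟨v, O v⟩ ≤ G₊(y, z). (Upper Cauchy–Schwarz constraint, Theorem 1 of the paper.) -/
/-!
Write `v = c • u + w` with `c = ⟪u, v⟫`, so that `w ⟂ u`, `‖c‖² = z` and `‖w‖² = 1 - z`. For the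
symmetric `O` this gives `Re⟪v, O v⟫ = z y + 2 Re (c̄ ⟪u, O w⟫) + t` with `t = Re⟪w, O w⟫`, and the
Cauchy–Schwarz inequality for the positive Hermitian forms of `O` and of `1 - O` bounds
`‖⟪u, O w⟫‖²` by both `y t` and `(1 - y) (1 - z - t)`. Maximising the resulting real expression
gives `g₊(y, z) = (√(zy) + √((1 - z)(1 - y)))²`, which is `cos²(α - β)` for `y = cos² α`,
`z = cos² β`.
-/

noncomputable def gPlus (y z : ℝ) : ℝ :=
  y + (1 - z) * (1 - 2 * y) + 2 * Real.sqrt (z * (1 - z) * y * (1 - y))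

noncomputable def GPlus (y z : ℝ) : ℝ :=
  if y < z then gPlus y z else 1

open Real RCLike ComplexConjugate

/- With `(a, a') = (cos α, sin α)`, `(c, c') = (cos β, sin β)` for `β ≤ α` and
`(p, r) = sin β • (cos φ, sin φ)`, the left side is largest at `φ = α`, where it equals the right
side; the case split is `φ ≤ α` versus `φ ≥ α`. -/
lemma two_mul_mul_add_sq_le {a a' c c' p r q : ℝ} (ha : 0 ≤ a) (ha' : 0 ≤ a') (hc : 0 ≤ c)
    (hc' : 0 ≤ c') (hp : 0 ≤ p) (hr : 0 ≤ r) (haa' : a ^ 2 + a' ^ 2 = 1)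
    (hpr : p ^ 2 + r ^ 2 = c' ^ 2) (hca : c' * a ≤ c * a') (hqr : q ≤ a * r) (hqp : q ≤ a' * p) :
    2 * c * q + r ^ 2 ≤ (c' * a') ^ 2 + 2 * (c * a) * (c' * a') := by
  rcases le_total r (c' * a') with hr' | hr'
  · nlinarith [mul_le_mul_of_nonneg_left hqr hc,
      mul_le_mul_of_nonneg_left hr' (mul_nonneg hc ha)]
  · have hpa : p ≤ c' * a := by
      refine (pow_le_pow_iff_left₀ hp (mul_nonneg hc' ha) two_ne_zero).1 ?_
      nlinarith [mul_le_mul hr' hr' (mul_nonneg hc' ha') hr]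
    nlinarith [mul_le_mul_of_nonneg_left hqp hc,
      mul_nonneg (sub_nonneg.2 hpa) (by linarith : 0 ≤ 2 * (c * a') - c' * a - p)]

lemma gPlus_eq_sq {y z : ℝ} (hy₀ : 0 ≤ y) (hy₁ : y ≤ 1) (hz₀ : 0 ≤ z) (hz₁ : z ≤ 1) :
    gPlus y z = (√z * √y + √(1 - z) * √(1 - y)) ^ 2 := by
  rw [gPlus, sqrt_mul (by positivity), sqrt_mul (by positivity), sqrt_mul hz₀, add_sq, mul_pow,
    mul_pow, sq_sqrt hz₀, sq_sqrt hy₀, sq_sqrt (by linarith), sq_sqrt (by linarith)]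
  ring

lemma mul_add_two_mul_sqrt_mul_add_le_gPlus {y z t q : ℝ} (hy₀ : 0 ≤ y) (hy₁ : y ≤ 1)
    (hyz : y ≤ z) (ht₀ : 0 ≤ t) (ht₁ : t ≤ 1 - z) (hqy : q ^ 2 ≤ y * t)
    (hqz : q ^ 2 ≤ (1 - y) * (1 - z - t)) :
    z * y + 2 * √z * q + t ≤ gPlus y z := by
  have hz₀ : 0 ≤ z := hy₀.trans hyz
  have hz₁ : z ≤ 1 := by linarith
  have key := two_mul_mul_add_sq_le (a := √y) (a' := √(1 - y)) (c := √z) (c' := √(1 - z))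
    (p := √(1 - z - t)) (r := √t) (sqrt_nonneg _) (sqrt_nonneg _) (sqrt_nonneg _)
    (sqrt_nonneg _) (sqrt_nonneg _) (sqrt_nonneg _)
    (by rw [sq_sqrt hy₀, sq_sqrt (by linarith)]; ring)
    (by rw [sq_sqrt (by linarith), sq_sqrt ht₀, sq_sqrt (by linarith)]; ring)
    (by rw [← sqrt_mul (by linarith), ← sqrt_mul hz₀]; exact sqrt_le_sqrt (by nlinarith))
    ((le_abs_self q).trans (by rw [← sqrt_mul hy₀]; exact abs_le_sqrt hqy))
    ((le_abs_self q).trans (by rw [← sqrt_mul (by linarith)]; exact abs_le_sqrt hqz))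
  rw [gPlus_eq_sq hy₀ hy₁ hz₀ hz₁, add_sq, mul_pow, sq_sqrt hz₀, sq_sqrt hy₀]
  rw [sq_sqrt ht₀] at key
  linarith

section InnerProductSpace

variable {𝕜 E : Type*} [RCLike 𝕜] [NormedAddCommGroup E] [InnerProductSpace 𝕜 E]

local notation "⟪" x ", " y "⟫" => inner 𝕜 x y

theorem inner_sub_inner_smul_self_eq_zero {u : E} (hu : ‖u‖ = 1) (v : E) :
    ⟪u, v - ⟪u, v⟫ • u⟫ = 0 := by
  simp [inner_sub_right, inner_smul_right, inner_self_eq_norm_sq_to_K, hu]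

theorem norm_sub_inner_smul_self_sq {u : E} (hu : ‖u‖ = 1) (v : E) :
    ‖v - ⟪u, v⟫ • u‖ ^ 2 = ‖v‖ ^ 2 - ‖⟪u, v⟫‖ ^ 2 := by
  have h := norm_add_sq_eq_norm_sq_add_norm_sq_of_inner_eq_zero (⟪u, v⟫ • u) (v - ⟪u, v⟫ • u)
    (by rw [inner_smul_left, inner_sub_inner_smul_self_eq_zero hu, mul_zero])
  rw [add_sub_cancel, norm_smul, hu, mul_one] at h
  linarith

namespace LinearMap

theorem IsPositive.norm_inner_apply_sq_le {T : E →ₗ[𝕜] E} (hT : T.IsPositive) (x y : E) :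
    ‖⟪x, T y⟫‖ ^ 2 ≤ re ⟪x, T x⟫ * re ⟪y, T y⟫ := by
  let core : PreInnerProductSpace.Core 𝕜 E :=
    { inner := fun a b => ⟪a, T b⟫
      conj_inner_symm := fun a b => by rw [inner_conj_symm, hT.isSymmetric]
      re_inner_nonneg := hT.re_inner_nonneg_right
      add_left := fun _ _ _ => inner_add_left _ _ _
      smul_left := fun _ _ _ => inner_smul_left _ _ _ }
  have h : ‖⟪x, T y⟫‖ * ‖⟪y, T x⟫‖ ≤ re ⟪x, T x⟫ * re ⟪y, T y⟫ :=
    @InnerProductSpace.Core.inner_mul_inner_self_le 𝕜 E _ _ _ core x y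
  have hsymm : ‖⟪y, T x⟫‖ = ‖⟪x, T y⟫‖ := by rw [← hT.isSymmetric, norm_inner_symm]
  rwa [hsymm, ← sq] at h

theorem re_inner_apply_self_le_norm_sq {T : E →ₗ[𝕜] E} (hT : (id - T).IsPositive) (x : E) :
    re ⟪x, T x⟫ ≤ ‖x‖ ^ 2 := by
  have := hT.re_inner_nonneg_right x
  rw [sub_apply, id_apply, inner_sub_right, map_sub, inner_self_eq_norm_sq] at this
  linarith

theorem norm_inner_apply_sq_le_of_inner_eq_zero {T : E →ₗ[𝕜] E} (hT : (id - T).IsPositive)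
    {x y : E} (hxy : ⟪x, y⟫ = 0) :
    ‖⟪x, T y⟫‖ ^ 2 ≤ (‖x‖ ^ 2 - re ⟪x, T x⟫) * (‖y‖ ^ 2 - re ⟪y, T y⟫) := by
  simpa only [sub_apply, id_apply, inner_sub_right, hxy, zero_sub, norm_neg, map_sub,
    inner_self_eq_norm_sq] using hT.norm_inner_apply_sq_le x y

theorem IsSymmetric.re_inner_smul_add_apply {T : E →ₗ[𝕜] E} (hT : T.IsSymmetric) (c : 𝕜)
    (u w : E) :
    re ⟪c • u + w, T (c • u + w)⟫
      = ‖c‖ ^ 2 * re ⟪u, T u⟫ + 2 * re (conj c * ⟪u, T w⟫) + re ⟪w, T w⟫ := by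
  have hcross : re ⟪w, T (c • u)⟫ = re ⟪c • u, T w⟫ := by rw [← hT, inner_re_symm]
  simp only [map_add, inner_add_left, inner_add_right, hcross]
  simp only [map_smul, inner_smul_left, inner_smul_right, ← mul_assoc, RCLike.mul_conj]
  rw [← ofReal_pow, re_ofReal_mul]
  ring

theorem IsSymmetric.re_inner_apply_self_le {T : E →ₗ[𝕜] E} (hT : T.IsSymmetric) (u v : E) :
    re ⟪v, T v⟫ ≤ ‖⟪u, v⟫‖ ^ 2 * re ⟪u, T u⟫ + 2 * ‖⟪u, v⟫‖ * ‖⟪u, T (v - ⟪u, v⟫ • u)⟫‖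
      + re ⟪v - ⟪u, v⟫ • u, T (v - ⟪u, v⟫ • u)⟫ := by
  have h := hT.re_inner_smul_add_apply ⟪u, v⟫ u (v - ⟪u, v⟫ • u)
  rw [add_sub_cancel] at h
  rw [h, mul_assoc, ← norm_conj ⟪u, v⟫, ← norm_mul]
  gcongr
  exact re_le_norm _

end LinearMap

end InnerProductSpace

theorem upper_cauchy_schwarz_constraint_general
    {H : Type*} [NormedAddCommGroup H] [InnerProductSpace ℂ H]
    (u v : H) (hu : ‖u‖ = 1) (hv : ‖v‖ = 1)
    (O : H →L[ℂ] H) (hO : O.IsPositive)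
    (hO' : (ContinuousLinearMap.id ℂ H - O).IsPositive) :
    (inner ℂ v (O v) : ℂ).re ≤
      GPlus ((inner ℂ u (O u) : ℂ).re) (‖(inner ℂ v u : ℂ)‖ ^ 2) := by
  set y := (inner ℂ u (O u)).re
  set z := ‖inner ℂ v u‖ ^ 2
  rw [GPlus]
  split_ifs with hyz
  case neg => simpa [hv] using LinearMap.re_inner_apply_self_le_norm_sq hO' v
  set w := v - inner ℂ u v • u
  have hw : ‖w‖ ^ 2 = 1 - z := by
    rw [norm_sub_inner_smul_self_sq hu, hv, one_pow, norm_inner_symm]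
  have hyu : y ≤ 1 := by simpa [hu] using LinearMap.re_inner_apply_self_le_norm_sq hO' u
  have hqz := LinearMap.norm_inner_apply_sq_le_of_inner_eq_zero hO'
    (inner_sub_inner_smul_self_eq_zero hu v)
  rw [hu, hw, one_pow] at hqz
  calc (inner ℂ v (O v)).re
      ≤ z * y + 2 * √z * ‖inner ℂ u (O w)‖ + (inner ℂ w (O w)).re := by
        have hc : ‖inner ℂ u v‖ = √z := by rw [norm_inner_symm, sqrt_sq (norm_nonneg _)]
        have h := hO.isSymmetric.re_inner_apply_self_le u v
        rwa [hc, sq_sqrt (by positivity)] at h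
    _ ≤ gPlus y z :=
      mul_add_two_mul_sqrt_mul_add_le_gPlus (hO.re_inner_nonneg_right u) hyu hyz.le
        (hO.re_inner_nonneg_right w) (hw ▸ LinearMap.re_inner_apply_self_le_norm_sq hO' w)
        (hO.toLinearMap.norm_inner_apply_sq_le u w) hqz

theorem upper_cauchy_schwarz_constraint
    {H : Type*} [NormedAddCommGroup H] [InnerProductSpace ℂ H] [CompleteSpace H]
    (u v : H) (hu : ‖u‖ = 1) (hv : ‖v‖ = 1)
    (O : H →L[ℂ] H) (hO : O.IsPositive)
    (hO' : (ContinuousLinearMap.id ℂ H - O).IsPositive) :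
    (inner ℂ v (O v) : ℂ).re ≤
      GPlus ((inner ℂ u (O u) : ℂ).re) (‖(inner ℂ v u : ℂ)‖ ^ 2) :=
  upper_cauchy_schwarz_constraint_general u v hu hv O hO hO'
end

section
/- Fix z ∈ [0,1]. For every reference point ỹ ∈ (0,1) and every y ∈ [0,1], the first-order (tangent-line) expansion of G₊ at ỹ is a valid upper bound: G₊(y, z) ≤ G₊(ỹ, z) + G₊′(ỹ, z)·(y − ỹ). (Linearized upper Cauchy–Schwarz constraint.) -/
noncomputable def gPlus' (y z : ℝ) : ℝ :=
  -1 + 2 * z + (1 - 2 * y) * Real.sqrt (z * (1 - z) / (y * (1 - y)))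

noncomputable def GPlus' (y z : ℝ) : ℝ :=
  if y < z then gPlus' y z else 0

open Real Set

/-!
Write `a = √(z(1-z))` and `b(y) = √(y(1-y))`. Then `g₊(·, z)` is an affine function plus `2 a b`,
and `g₊′(·, z)` is its derivative; since `b` is concave on `[0,1]`, `g₊(·, z)` lies below its
tangent lines. On `[z, 1]` the function `G₊` is capped at `1 = g₊(z, z) = max g₊(·, z)`: a tangent at
`ỹ < z` lies above `1` at `z` and starts below `1`, so it is increasing and stays above `1`.
-/

lemma sqrt_mul_one_sub_le_tangent {t y : ℝ} (ht : t ∈ Ioo 0 1) (hy : y ∈ Icc 0 1) :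
    √(y * (1 - y)) ≤ √(t * (1 - t)) + (1 - 2 * t) / (2 * √(t * (1 - t))) * (y - t) := by
  obtain ⟨ht0, ht1⟩ := ht
  obtain ⟨hy0, hy1⟩ := hy
  have hbt : 0 < √(t * (1 - t)) := sqrt_pos.mpr (by nlinarith)
  have hbt_sq : √(t * (1 - t)) ^ 2 = t * (1 - t) := sq_sqrt (by nlinarith)
  have hb_sq : √(y * (1 - y)) ^ 2 = y * (1 - y) := sq_sqrt (by nlinarith)
  rw [← sub_nonneg]
  have hgap : (√(t * (1 - t)) + (1 - 2 * t) / (2 * √(t * (1 - t))) * (y - t) - √(y * (1 - y)))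
      = ((√(y * (1 - y)) - √(t * (1 - t))) ^ 2 + (y - t) ^ 2) / (2 * √(t * (1 - t))) := by
    field_simp
    linear_combination hbt_sq - hb_sq
  rw [hgap]
  positivity

lemma gPlus_eq {z : ℝ} (hz : z ∈ Icc 0 1) (y : ℝ) :
    gPlus y z = y + (1 - z) * (1 - 2 * y) + 2 * (√(z * (1 - z)) * √(y * (1 - y))) := by
  rw [gPlus, ← sqrt_mul (by nlinarith [hz.1, hz.2]), mul_assoc (z * (1 - z))]

lemma gPlus'_eq {z : ℝ} (hz : z ∈ Icc 0 1) (t : ℝ) :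
    gPlus' t z = -1 + 2 * z + (1 - 2 * t) * (√(z * (1 - z)) / √(t * (1 - t))) := by
  rw [gPlus', sqrt_div (by nlinarith [hz.1, hz.2])]

lemma gPlus_le_tangent {z t y : ℝ} (hz : z ∈ Icc 0 1) (ht : t ∈ Ioo 0 1) (hy : y ∈ Icc 0 1) :
    gPlus y z ≤ gPlus t z + gPlus' t z * (y - t) := by
  have key := mul_le_mul_of_nonneg_left (sqrt_mul_one_sub_le_tangent ht hy)
    (sqrt_nonneg (z * (1 - z)))
  rw [gPlus_eq hz, gPlus_eq hz, gPlus'_eq hz]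
  linear_combination 2 * key

lemma gPlus_le_one {z y : ℝ} (hz : z ∈ Icc 0 1) (hy : y ∈ Icc 0 1) : gPlus y z ≤ 1 := by
  obtain ⟨hz0, hz1⟩ := hz
  obtain ⟨hy0, hy1⟩ := hy
  have hp : 0 ≤ z * (1 - y) := by nlinarith
  have hq : 0 ≤ y * (1 - z) := by nlinarith
  have hsplit : √(z * (1 - z) * y * (1 - y)) = √(z * (1 - y)) * √(y * (1 - z)) := by
    rw [← sqrt_mul hp]
    ring_nf
  rw [gPlus, hsplit]
  nlinarith [sq_nonneg (√(z * (1 - y)) - √(y * (1 - z))), sq_sqrt hp, sq_sqrt hq]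

lemma gPlus_self {z : ℝ} (hz : z ∈ Icc 0 1) : gPlus z z = 1 := by
  rw [gPlus, show z * (1 - z) * z * (1 - z) = (z * (1 - z)) ^ 2 by ring,
    sqrt_sq (by nlinarith [hz.1, hz.2])]
  ring

lemma one_le_gPlus_tangent_of_lt_le {z t y : ℝ} (hz : z ∈ Icc 0 1) (ht : t ∈ Ioo 0 1)
    (htz : t < z) (hzy : z ≤ y) : 1 ≤ gPlus t z + gPlus' t z * (y - t) := by
  have hat_z : 1 ≤ gPlus t z + gPlus' t z * (z - t) :=
    gPlus_self hz ▸ gPlus_le_tangent hz ht hz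
  have hstart : gPlus t z ≤ 1 := gPlus_le_one hz (Ioo_subset_Icc_self ht)
  have hslope : 0 ≤ gPlus' t z := by
    by_contra! hneg
    nlinarith
  nlinarith

theorem linearized_upper_cs (z : ℝ) (hz : z ∈ Set.Icc (0 : ℝ) 1)
    (yt : ℝ) (hyt : yt ∈ Set.Ioo (0 : ℝ) 1)
    (y : ℝ) (hy : y ∈ Set.Icc (0 : ℝ) 1) :
    GPlus y z ≤ GPlus yt z + GPlus' yt z * (y - yt) := by
  unfold GPlus GPlus'
  split_ifs with hyz hytz hytz
  · exact gPlus_le_tangent hz hyt hy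
  · simpa using gPlus_le_one hz hy
  · exact one_le_gPlus_tangent_of_lt_le hz hyt hytz (not_lt.mp hyz)
  · simp
end

section
/- Let μ be a probability measure on ℝ whose support is contained in [a⁻, a⁺] with 0 < a⁻ ≤ a⁺ ≤ 1, let p_n = ∫ e^{−α} αⁿ / n! dμ(α), let Y : ℕ → [0,1], and let n_cut ∈ ℕ. Then the decoy-state lower bound holds: ∑_{n=0}^{∞} p_n·Y(n) ≥ e^{−a⁺}·Y(0) + ∑_{n=1}^{n_cut} (e^{−a⁻}(a⁻)ⁿ/n!)·Y(n). -/
open MeasureTheory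

theorem decoy_state_lower_bound
    (μ : Measure ℝ) [IsProbabilityMeasure μ]
    (am ap : ℝ) (ham : 0 < am) (hle : am ≤ ap) (hap : ap ≤ 1)
    (hsupp : ∀ᵐ α ∂μ, α ∈ Set.Icc am ap)
    (p : ℕ → ℝ)
    (hp : ∀ n, p n = ∫ α, Real.exp (-α) * α ^ n / (Nat.factorial n) ∂μ)
    (Y : ℕ → ℝ) (hY : ∀ n, Y n ∈ Set.Icc (0 : ℝ) 1)
    (ncut : ℕ) :
    Real.exp (-ap) * Y 0 +
      ∑ n ∈ Finset.Icc 1 ncut, (Real.exp (-am) * am ^ n / (Nat.factorial n)) * Y n ≤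
    ∑' n, p n * Y n := by
  have hint : ∀ n : ℕ, Integrable (fun α => Real.exp (-α) * α ^ n / (Nat.factorial n)) μ := by
    intro n
    apply Integrable.mono' (integrable_const (1 / (Nat.factorial n : ℝ)))
    · exact (((Real.continuous_exp.comp continuous_neg).mul (continuous_pow n)).div_const
        _).aestronglyMeasurable
    · filter_upwards [hsupp] with α hα
      obtain ⟨h1, h2⟩ := hα
      have hα0 : 0 < α := lt_of_lt_of_le ham h1
      have hα1 : α ≤ 1 := h2.trans hap
      have he : Real.exp (-α) ≤ 1 := Real.exp_le_one_iff.mpr (by linarith)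
      have hpow : α ^ n ≤ 1 := pow_le_one₀ hα0.le hα1
      rw [Real.norm_eq_abs, abs_of_nonneg (by positivity)]
      have hf : (0:ℝ) < Nat.factorial n := by positivity
      gcongr
      nlinarith [Real.exp_pos (-α), pow_nonneg hα0.le n]
  have hp_nonneg : ∀ n, 0 ≤ p n := by
    intro n
    rw [hp n]
    apply integral_nonneg_of_ae
    filter_upwards [hsupp] with α hα
    have hα0 : 0 < α := lt_of_lt_of_le ham hα.1
    positivity
  have hp_le : ∀ n, p n ≤ 1 / (Nat.factorial n : ℝ) := by
    intro n
    rw [hp n]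
    have : (1 : ℝ) / (Nat.factorial n : ℝ) = ∫ _, (1 / (Nat.factorial n : ℝ)) ∂μ := by
      simp
    rw [this]
    apply integral_mono_ae (hint n) (integrable_const _)
    filter_upwards [hsupp] with α hα
    obtain ⟨h1, h2⟩ := hα
    have hα0 : 0 < α := lt_of_lt_of_le ham h1
    have hα1 : α ≤ 1 := h2.trans hap
    have he : Real.exp (-α) ≤ 1 := Real.exp_le_one_iff.mpr (by linarith)
    have hpow : α ^ n ≤ 1 := pow_le_one₀ hα0.le hα1
    have hf : (0:ℝ) < Nat.factorial n := by positivity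
    gcongr
    nlinarith [Real.exp_pos (-α), pow_nonneg hα0.le n]
  have hsummaux : Summable (fun n : ℕ => 1 / (Nat.factorial n : ℝ)) := by
    simpa using Real.summable_pow_div_factorial 1
  have hsum : Summable (fun n => p n * Y n) := by
    apply Summable.of_nonneg_of_le
      (fun n => mul_nonneg (hp_nonneg n) (hY n).1) _ hsummaux
    intro n
    calc p n * Y n ≤ p n * 1 := by
          exact mul_le_mul_of_nonneg_left (hY n).2 (hp_nonneg n)
      _ = p n := mul_one _
      _ ≤ 1 / (Nat.factorial n : ℝ) := hp_le n
  have key0 : Real.exp (-ap) ≤ p 0 := by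
    rw [hp 0]
    have : Real.exp (-ap) = ∫ _, Real.exp (-ap) ∂μ := by simp
    rw [this]
    apply integral_mono_ae (integrable_const _) (hint 0)
    filter_upwards [hsupp] with α hα
    simp only [pow_zero, mul_one, Nat.factorial_zero, Nat.cast_one, div_one]
    exact Real.exp_le_exp.mpr (by linarith [hα.2])
  have keyn : ∀ n ∈ Finset.Icc 1 ncut,
      Real.exp (-am) * am ^ n / (Nat.factorial n : ℝ) ≤ p n := by
    intro n hn
    have hn1 : 1 ≤ n := (Finset.mem_Icc.mp hn).1
    rw [hp n]
    have : Real.exp (-am) * am ^ n / (Nat.factorial n : ℝ)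
        = ∫ _, Real.exp (-am) * am ^ n / (Nat.factorial n : ℝ) ∂μ := by simp
    rw [this]
    apply integral_mono_ae (integrable_const _) (hint n)
    filter_upwards [hsupp] with α hα
    obtain ⟨h1, h2⟩ := hα
    have hα0 : 0 < α := lt_of_lt_of_le ham h1
    have hα1 : α ≤ 1 := h2.trans hap
    have hf : (0:ℝ) < Nat.factorial n := by positivity
    gcongr ?_ / _
    -- core: exp(-am) * am^n ≤ exp(-α) * α^n
    have hbase : Real.exp (α - am) ≤ α / am := by
      have h3 := Real.add_one_le_exp (am - α)
      have h4 : Real.exp (am - α) * Real.exp (α - am) = 1 := by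
        rw [← Real.exp_add]; simp
      have h5 := Real.exp_pos (am - α)
      rw [le_div_iff₀ ham]
      nlinarith [Real.exp_pos (α - am), mul_nonneg (sub_nonneg.mpr h1) (sub_nonneg.mpr hα1)]
    have hpow : Real.exp (α - am) ≤ (α / am) ^ n :=
      hbase.trans (le_self_pow₀ ((one_le_div ham).mpr h1) (by omega))
    have e1 : Real.exp (-am) = Real.exp (-α) * Real.exp (α - am) := by
      rw [← Real.exp_add]; ring_nf
    have e2 : (α / am) ^ n * am ^ n = α ^ n := by
      rw [div_pow]; field_simp
    calc Real.exp (-am) * am ^ n = Real.exp (-α) * (Real.exp (α - am) * am ^ n) := by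
          rw [e1]; ring
      _ ≤ Real.exp (-α) * ((α / am) ^ n * am ^ n) := by
          have := mul_le_mul_of_nonneg_right hpow (pow_nonneg ham.le n)
          exact mul_le_mul_of_nonneg_left this (Real.exp_pos (-α)).le
      _ = Real.exp (-α) * α ^ n := by rw [e2]
  calc Real.exp (-ap) * Y 0 +
      ∑ n ∈ Finset.Icc 1 ncut, (Real.exp (-am) * am ^ n / (Nat.factorial n)) * Y n
      ≤ p 0 * Y 0 + ∑ n ∈ Finset.Icc 1 ncut, p n * Y n := by
        apply add_le_add
        · exact mul_le_mul_of_nonneg_right key0 (hY 0).1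
        · exact Finset.sum_le_sum fun n hn =>
            mul_le_mul_of_nonneg_right (keyn n hn) (hY n).1
    _ = ∑ n ∈ insert 0 (Finset.Icc 1 ncut), p n * Y n := by
        rw [Finset.sum_insert (by simp)]
    _ ≤ ∑' n, p n * Y n :=
        Summable.sum_le_tsum _ (fun n _ => mul_nonneg (hp_nonneg n) (hY n).1) hsum
end

section
/- Let μ be a probability measure on ℝ whose support is contained in [a⁻, a⁺] with 0 < a⁻ ≤ a⁺ ≤ 1, let p_n = ∫ e^{−α} αⁿ / n! dμ(α), let Y : ℕ → [0,1], and let n_cut ∈ ℕ. Then the decoy-state upper bound holds: ∑_{n=0}^{∞} p_n·Y(n) ≤ 1 − e^{−a⁺} + e^{−a⁻}·Y(0) − ∑_{n=1}^{n_cut} (e^{−a⁺}(a⁺)ⁿ/n!)·(1 − Y(n)). -/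
/-!
For `n ≥ 1` the weight `α ↦ e^{-α} αⁿ` is increasing on `[0, n] ⊇ [0, a⁺]`, so
`p n ≤ q n := e^{-a⁺} (a⁺)ⁿ / n!`, while `p 0 ≤ e^{-a⁻}`. Bounding `Y` by `1` beyond `n_cut` gives
`∑ p n Y n ≤ p 0 Y 0 + ∑_{1 ≤ n ≤ n_cut} q n Y n + ∑_{n > n_cut} q n`, and `∑ q n = 1` because `q`
is the Poisson distribution of mean `a⁺`.
-/

open MeasureTheory Real Finset
open scoped Nat

theorem hasSum_exp_neg_mul_pow_div_factorial (x : ℝ) :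
    HasSum (fun n ↦ exp (-x) * x ^ n / n !) 1 := by
  have := (NormedSpace.expSeries_div_hasSum_exp x).mul_left (exp (-x))
  simpa only [← exp_eq_exp_ℝ, ← exp_add, neg_add_cancel, exp_zero, mul_div_assoc] using this

theorem monotoneOn_exp_neg_mul_pow (n : ℕ) :
    MonotoneOn (fun x : ℝ ↦ exp (-x) * x ^ n) (Set.Icc 0 n) := by
  refine monotoneOn_of_hasDerivWithinAt_nonneg (f' := fun x ↦ exp (-x) * (n * x ^ (n - 1) - x ^ n))
    (convex_Icc (0 : ℝ) n) (by fun_prop) (fun x _ ↦ ?_) (fun x hx ↦ ?_)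
  · have h : HasDerivAt (fun x ↦ exp (-x) * x ^ n)
        (exp (-x) * -1 * x ^ n + exp (-x) * (n * x ^ (n - 1))) x :=
      (hasDerivAt_neg x).exp.mul (hasDerivAt_pow n x)
    exact (h.congr_deriv (by ring)).hasDerivWithinAt
  · rw [interior_Icc] at hx
    obtain ⟨m, rfl⟩ : ∃ m, n = m + 1 :=
      Nat.exists_eq_add_one.mpr (by exact_mod_cast hx.1.trans hx.2)
    have : x ^ (m + 1) ≤ ((m + 1 : ℕ) : ℝ) * x ^ m := by
      rw [pow_succ']
      exact mul_le_mul_of_nonneg_right hx.2.le (pow_nonneg hx.1.le m)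
    simp only [add_tsub_cancel_right]
    exact mul_nonneg (exp_pos _).le (sub_nonneg.mpr this)

theorem integral_le_of_nonneg_of_ae_le {α : Type*} [MeasurableSpace α] {μ : Measure α}
    [IsProbabilityMeasure μ] {f : α → ℝ} {c : ℝ} (hf : 0 ≤ᵐ[μ] f) (hfc : ∀ᵐ x ∂μ, f x ≤ c) :
    ∫ x, f x ∂μ ≤ c := by
  have := integral_mono_of_nonneg hf (integrable_const c) hfc
  rwa [integral_const, probReal_univ, one_smul] at this

theorem tsum_mul_le_of_le_of_ne_zero {p q Y : ℕ → ℝ} (N : ℕ) (hp : ∀ n, 0 ≤ p n)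
    (hpq : ∀ n, n ≠ 0 → p n ≤ q n) (hq : Summable q) (hY : ∀ n, Y n ∈ Set.Icc (0 : ℝ) 1) :
    ∑' n, p n * Y n ≤ ∑' n, q n - q 0 + p 0 * Y 0 - ∑ n ∈ Icc 1 N, q n * (1 - Y n) := by
  have htail : ∀ n, p (n + (N + 1)) * Y (n + (N + 1)) ≤ q (n + (N + 1)) := fun n ↦
    (mul_le_of_le_one_right (hp _) (hY _).2).trans (hpq _ (Nat.succ_ne_zero _))
  have hqtail : Summable fun n ↦ q (n + (N + 1)) := (summable_nat_add_iff (N + 1)).mpr hq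
  have hpYtail : Summable fun n ↦ p (n + (N + 1)) * Y (n + (N + 1)) :=
    hqtail.of_nonneg_of_le (fun n ↦ mul_nonneg (hp _) (hY _).1) htail
  have hpY : Summable fun n ↦ p n * Y n := (summable_nat_add_iff (N + 1)).mp hpYtail
  have hhead : ∑ n ∈ Icc 1 N, p n * Y n ≤ ∑ n ∈ Icc 1 N, q n * Y n :=
    sum_le_sum fun n hn ↦ mul_le_mul_of_nonneg_right
      (hpq n (by rw [Finset.mem_Icc] at hn; omega)) (hY n).1
  rw [← hpY.sum_add_tsum_nat_add (N + 1),
    ← hq.sum_add_tsum_nat_add (N + 1), sum_range_eq_add_Ico _ N.add_one_pos,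
    sum_range_eq_add_Ico _ N.add_one_pos, Ico_add_one_right_eq_Icc]
  simp only [mul_sub, mul_one, sum_sub_distrib]
  linarith [hpYtail.tsum_le_tsum htail hqtail]

theorem decoy_state_upper_bound_general
    (μ : Measure ℝ) [IsProbabilityMeasure μ]
    (am ap : ℝ) (ham : 0 < am) (hap : ap ≤ 1)
    (hsupp : ∀ᵐ α ∂μ, α ∈ Set.Icc am ap)
    (p : ℕ → ℝ)
    (hp : ∀ n, p n = ∫ α, Real.exp (-α) * α ^ n / (Nat.factorial n) ∂μ)
    (Y : ℕ → ℝ) (hY : ∀ n, Y n ∈ Set.Icc (0 : ℝ) 1)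
    (ncut : ℕ) :
    ∑' n, p n * Y n ≤
      1 - Real.exp (-ap) + Real.exp (-am) * Y 0 -
        ∑ n ∈ Finset.Icc 1 ncut, (Real.exp (-ap) * ap ^ n / (Nat.factorial n)) * (1 - Y n) := by
  have hweight_nonneg (n : ℕ) : ∀ᵐ α ∂μ, 0 ≤ exp (-α) * α ^ n / n ! := by
    filter_upwards [hsupp] with α hα
    have : 0 ≤ α := ham.le.trans hα.1
    positivity
  have hp0 : p 0 ≤ exp (-am) := by
    rw [hp]
    refine integral_le_of_nonneg_of_ae_le (hweight_nonneg 0) ?_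
    filter_upwards [hsupp] with α hα
    simpa using hα.1
  have hpq (n : ℕ) (hn : n ≠ 0) : p n ≤ exp (-ap) * ap ^ n / n ! := by
    rw [hp]
    refine integral_le_of_nonneg_of_ae_le (hweight_nonneg n) ?_
    filter_upwards [hsupp] with α hα
    have hα0 : 0 ≤ α := ham.le.trans hα.1
    have hapn : ap ≤ n := hap.trans (by exact_mod_cast Nat.one_le_iff_ne_zero.mpr hn)
    exact div_le_div_of_nonneg_right
      (monotoneOn_exp_neg_mul_pow n ⟨hα0, hα.2.trans hapn⟩ ⟨hα0.trans hα.2, hapn⟩ hα.2)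
      (Nat.cast_nonneg _)
  have hq := hasSum_exp_neg_mul_pow_div_factorial ap
  have hsplit := tsum_mul_le_of_le_of_ne_zero ncut
    (fun n ↦ (hp n).symm ▸ integral_nonneg_of_ae (hweight_nonneg n)) hpq hq.summable hY
  rw [hq.tsum_eq] at hsplit
  simp only [pow_zero, Nat.factorial_zero, Nat.cast_one, mul_one, div_one] at hsplit
  refine hsplit.trans ?_
  gcongr
  exact (hY 0).1

theorem decoy_state_upper_bound
    (μ : Measure ℝ) [IsProbabilityMeasure μ]
    (am ap : ℝ) (ham : 0 < am) (hle : am ≤ ap) (hap : ap ≤ 1)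
    (hsupp : ∀ᵐ α ∂μ, α ∈ Set.Icc am ap)
    (p : ℕ → ℝ)
    (hp : ∀ n, p n = ∫ α, Real.exp (-α) * α ^ n / (Nat.factorial n) ∂μ)
    (Y : ℕ → ℝ) (hY : ∀ n, Y n ∈ Set.Icc (0 : ℝ) 1)
    (ncut : ℕ) :
    ∑' n, p n * Y n ≤
      1 - Real.exp (-ap) + Real.exp (-am) * Y 0 -
        ∑ n ∈ Finset.Icc 1 ncut, (Real.exp (-ap) * ap ^ n / (Nat.factorial n)) * (1 - Y n) :=
  decoy_state_upper_bound_general μ am ap ham hap hsupp p hp Y hY ncut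
end

section
/- Let μ and ν be probability measures on ℝ whose supports are contained in [a⁻, a⁺] and [b⁻, b⁺] respectively, with 0 < a⁻ ≤ a⁺ ≤ 1 and 0 < b⁻ ≤ b⁺ ≤ 1, and let p_n = ∫ e^{−α} αⁿ/n! dμ(α) and q_n = ∫ e^{−β} βⁿ/n! dν(β). Then the Bhattacharyya coefficient of the two mixed Poisson distributions satisfies ∑_{n=0}^{∞} √(p_n·q_n) ≥ e^{−(a⁺ + b⁺)/2} + e^{−(a⁻ + b⁻)/2}·(e^{√(a⁻·b⁻)} − 1). -/
/-!
For `n ≥ 1` the Poisson weight `α ↦ e^{-α} αⁿ / n!` increases on `[0, n]` (its derivative is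
`e^{-α} αⁿ⁻¹ (n - α) / n!`), and for `n = 0` it decreases. Since all mixing parameters lie in
`(0, 1]`, this gives `p₀ ≥ e^{-a⁺}` and `pₙ ≥ e^{-a⁻} (a⁻)ⁿ / n!` for `n ≥ 1`, and likewise for `q`.
Comparing term by term, `∑ √(pₙ qₙ)` dominates
`e^{-(a⁺+b⁺)/2} + e^{-(a⁻+b⁻)/2} ∑_{n ≥ 1} √(a⁻b⁻)ⁿ / n!`, an exponential series.
-/

open MeasureTheory Real Set Nat

noncomputable def poissonProb (α : ℝ) (n : ℕ) : ℝ := exp (-α) * α ^ n / n !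

noncomputable def mixedPoissonProb (ρ : Measure ℝ) (n : ℕ) : ℝ := ∫ α, poissonProb α n ∂ρ

theorem poissonProb_nonneg {α : ℝ} (hα : 0 ≤ α) (n : ℕ) : 0 ≤ poissonProb α n := by
  unfold poissonProb; positivity

theorem differentiable_poissonProb (n : ℕ) : Differentiable ℝ (poissonProb · n) := by
  unfold poissonProb; fun_prop

theorem antitone_poissonProb_zero : Antitone (poissonProb · 0) := fun x y hxy => by
  simpa [poissonProb] using hxy

theorem monotoneOn_poissonProb (n : ℕ) : MonotoneOn (poissonProb · n) (Icc 0 n) := by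
  refine monotoneOn_of_deriv_nonneg (convex_Icc _ _)
    (differentiable_poissonProb n).continuous.continuousOn
    (differentiable_poissonProb n).differentiableOn fun x hx => ?_
  rw [interior_Icc] at hx
  obtain ⟨k, rfl⟩ : ∃ k, n = k + 1 :=
    Nat.exists_eq_succ_of_ne_zero (by rintro rfl; simpa using hx.1.trans hx.2)
  have hderiv : HasDerivAt (poissonProb · (k + 1))
      (exp (-x) * x ^ k * ((k + 1) - x) / (k + 1)!) x := by
    refine ((((hasDerivAt_neg x).exp).mul (hasDerivAt_pow (k + 1) x)).div_const _).congr_deriv ?_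
    push_cast
    ring
  rw [hderiv.deriv]
  have hxk : x < k + 1 := by exact_mod_cast hx.2
  exact div_nonneg (mul_nonneg (mul_nonneg (exp_pos _).le (pow_nonneg hx.1.le _)) (by linarith))
    (by positivity)

theorem poissonProb_le_pow_div_factorial {α : ℝ} (hα : 0 ≤ α) (n : ℕ) :
    poissonProb α n ≤ α ^ n / n ! := by
  unfold poissonProb
  gcongr
  exact mul_le_of_le_one_left (by positivity) (exp_le_one_iff.mpr (by linarith))

theorem sqrt_poissonProb_mul_poissonProb {a b : ℝ} (ha : 0 ≤ a) (hb : 0 ≤ b) (n : ℕ) :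
    √(poissonProb a n * poissonProb b n) = exp (-(a + b) / 2) * √(a * b) ^ n / n ! := by
  have hexp : exp (-(a + b) / 2) ^ 2 = exp (-a) * exp (-b) := by
    rw [sq, ← exp_add, ← exp_add]; congr 1; ring
  have hsqrt : (√(a * b) ^ n) ^ 2 = a ^ n * b ^ n := by
    rw [← pow_mul, mul_comm n 2, pow_mul, sq_sqrt (by positivity), mul_pow]
  rw [← sqrt_sq (by positivity : 0 ≤ exp (-(a + b) / 2) * √(a * b) ^ n / n !)]
  congr 1
  rw [div_pow, mul_pow, hexp, hsqrt, poissonProb, poissonProb]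
  ring

theorem sqrt_poissonProb_zero_mul_poissonProb_zero (a b : ℝ) :
    √(poissonProb a 0 * poissonProb b 0) = exp (-(a + b) / 2) := by
  simp only [poissonProb, pow_zero, mul_one, factorial_zero, cast_one, div_one]
  rw [exp_half, ← exp_add, neg_add]

theorem hasSum_pow_succ_div_factorial (x : ℝ) :
    HasSum (fun n => x ^ (n + 1) / (n + 1)!) (exp x - 1) := by
  simpa [exp_eq_exp_ℝ] using
    (hasSum_nat_add_iff' 1).mpr (NormedSpace.expSeries_div_hasSum_exp x)

theorem hasSum_sqrt_poissonProb_mul_poissonProb_succ {a b : ℝ} (ha : 0 ≤ a) (hb : 0 ≤ b) :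
    HasSum (fun n => √(poissonProb a (n + 1) * poissonProb b (n + 1)))
      (exp (-(a + b) / 2) * (exp √(a * b) - 1)) := by
  simp_rw [sqrt_poissonProb_mul_poissonProb ha hb, mul_div_assoc]
  exact (hasSum_pow_succ_div_factorial _).mul_left _

theorem Summable.sqrt_mul {f g : ℕ → ℝ} (hf : Summable f) (hg : Summable g)
    (hf0 : ∀ n, 0 ≤ f n) (hg0 : ∀ n, 0 ≤ g n) : Summable fun n => √(f n * g n) := by
  refine ((hf.add hg).div_const 2).of_nonneg_of_le (fun n => sqrt_nonneg _) fun n => ?_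
  rw [sqrt_le_iff]
  constructor
  · linarith [hf0 n, hg0 n]
  · nlinarith [sq_nonneg (f n - g n)]

theorem Continuous.integrable_of_ae_mem_Icc {ρ : Measure ℝ} [IsFiniteMeasure ρ] {a b : ℝ}
    {f : ℝ → ℝ} (hf : Continuous f) (h : ∀ᵐ α ∂ρ, α ∈ Icc a b) : Integrable f ρ := by
  rw [← Measure.restrict_eq_self_of_ae_mem h]
  exact hf.continuousOn.integrableOn_compact isCompact_Icc

theorem integrable_poissonProb {ρ : Measure ℝ} [IsFiniteMeasure ρ] {a b : ℝ}
    (h : ∀ᵐ α ∂ρ, α ∈ Icc a b) (n : ℕ) : Integrable (poissonProb · n) ρ :=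
  (differentiable_poissonProb n).continuous.integrable_of_ae_mem_Icc h

section MixedPoisson

variable {ρ : Measure ℝ} [IsProbabilityMeasure ρ] {a b : ℝ}

theorem le_mixedPoissonProb (h : ∀ᵐ α ∂ρ, α ∈ Icc a b) {n : ℕ} {c : ℝ}
    (hc : ∀ α ∈ Icc a b, c ≤ poissonProb α n) : c ≤ mixedPoissonProb ρ n := by
  simpa [mixedPoissonProb] using
    integral_mono_ae (integrable_const c) (integrable_poissonProb h n) (h.mono hc)

theorem mixedPoissonProb_le (h : ∀ᵐ α ∂ρ, α ∈ Icc a b) {n : ℕ} {c : ℝ}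
    (hc : ∀ α ∈ Icc a b, poissonProb α n ≤ c) : mixedPoissonProb ρ n ≤ c := by
  simpa [mixedPoissonProb] using
    integral_mono_ae (integrable_poissonProb h n) (integrable_const c) (h.mono hc)

theorem mixedPoissonProb_nonneg (h : ∀ᵐ α ∂ρ, α ∈ Icc a b) (ha : 0 ≤ a) (n : ℕ) :
    0 ≤ mixedPoissonProb ρ n :=
  le_mixedPoissonProb h fun _ hα => poissonProb_nonneg (ha.trans hα.1) n

theorem poissonProb_le_mixedPoissonProb_zero (h : ∀ᵐ α ∂ρ, α ∈ Icc a b) :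
    poissonProb b 0 ≤ mixedPoissonProb ρ 0 :=
  le_mixedPoissonProb h fun _ hα => antitone_poissonProb_zero hα.2

theorem poissonProb_le_mixedPoissonProb (h : ∀ᵐ α ∂ρ, α ∈ Icc a b) (ha : 0 ≤ a) {n : ℕ}
    (hb : b ≤ n) : poissonProb a n ≤ mixedPoissonProb ρ n :=
  le_mixedPoissonProb h fun _ hα => monotoneOn_poissonProb n ⟨ha, hα.1.trans (hα.2.trans hb)⟩
    ⟨ha.trans hα.1, hα.2.trans hb⟩ hα.1

theorem summable_mixedPoissonProb (h : ∀ᵐ α ∂ρ, α ∈ Icc a b) (ha : 0 ≤ a) :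
    Summable (mixedPoissonProb ρ) :=
  (summable_pow_div_factorial b).of_nonneg_of_le (mixedPoissonProb_nonneg h ha) fun n =>
    mixedPoissonProb_le h fun α hα => (poissonProb_le_pow_div_factorial (ha.trans hα.1) n).trans
      (by gcongr; exacts [ha.trans hα.1, hα.2])

end MixedPoisson

theorem mixed_poisson_bhattacharyya_lower_bound_general
    (μ ν : Measure ℝ) [IsProbabilityMeasure μ] [IsProbabilityMeasure ν]
    (am ap bm bp : ℝ)
    (ham : 0 < am) (hap : ap ≤ 1)
    (hbm : 0 < bm) (hbp : bp ≤ 1)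
    (hsuppμ : ∀ᵐ α ∂μ, α ∈ Set.Icc am ap)
    (hsuppν : ∀ᵐ β ∂ν, β ∈ Set.Icc bm bp)
    (p q : ℕ → ℝ)
    (hp : ∀ n, p n = ∫ α, Real.exp (-α) * α ^ n / (Nat.factorial n) ∂μ)
    (hq : ∀ n, q n = ∫ β, Real.exp (-β) * β ^ n / (Nat.factorial n) ∂ν) :
    Real.exp (-(ap + bp) / 2) +
      Real.exp (-(am + bm) / 2) * (Real.exp (Real.sqrt (am * bm)) - 1) ≤
    ∑' n, Real.sqrt (p n * q n) := by
  obtain rfl : p = mixedPoissonProb μ := funext hp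
  obtain rfl : q = mixedPoissonProb ν := funext hq
  have hsum : Summable fun n => √(mixedPoissonProb μ n * mixedPoissonProb ν n) :=
    (summable_mixedPoissonProb hsuppμ ham.le).sqrt_mul (summable_mixedPoissonProb hsuppν hbm.le)
      (mixedPoissonProb_nonneg hsuppμ ham.le) (mixedPoissonProb_nonneg hsuppν hbm.le)
  have hone (n : ℕ) : (1 : ℝ) ≤ (n + 1 : ℕ) := Nat.one_le_cast.mpr n.succ_pos
  have htail := hasSum_sqrt_poissonProb_mul_poissonProb_succ ham.le hbm.le
  have hzero : √(poissonProb ap 0 * poissonProb bp 0) ≤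
      √(mixedPoissonProb μ 0 * mixedPoissonProb ν 0) :=
    sqrt_le_sqrt <| mul_le_mul_of_nonneg (poissonProb_le_mixedPoissonProb_zero hsuppμ)
      (poissonProb_le_mixedPoissonProb_zero hsuppν) (by unfold poissonProb; positivity)
      (mixedPoissonProb_nonneg hsuppν hbm.le 0)
  have hsucc (n : ℕ) : √(poissonProb am (n + 1) * poissonProb bm (n + 1)) ≤
      √(mixedPoissonProb μ (n + 1) * mixedPoissonProb ν (n + 1)) :=
    sqrt_le_sqrt <| mul_le_mul_of_nonneg
      (poissonProb_le_mixedPoissonProb hsuppμ ham.le (hap.trans (hone n)))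
      (poissonProb_le_mixedPoissonProb hsuppν hbm.le (hbp.trans (hone n)))
      (poissonProb_nonneg ham.le _) (mixedPoissonProb_nonneg hsuppν hbm.le _)
  calc exp (-(ap + bp) / 2) + exp (-(am + bm) / 2) * (exp √(am * bm) - 1)
      = √(poissonProb ap 0 * poissonProb bp 0) +
          ∑' n, √(poissonProb am (n + 1) * poissonProb bm (n + 1)) := by
        rw [sqrt_poissonProb_zero_mul_poissonProb_zero, htail.tsum_eq]
    _ ≤ √(mixedPoissonProb μ 0 * mixedPoissonProb ν 0) +
          ∑' n, √(mixedPoissonProb μ (n + 1) * mixedPoissonProb ν (n + 1)) :=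
        add_le_add hzero <|
          htail.summable.tsum_le_tsum hsucc ((summable_nat_add_iff 1).mpr hsum)
    _ = _ := hsum.tsum_eq_zero_add.symm

theorem mixed_poisson_bhattacharyya_lower_bound
    (μ ν : Measure ℝ) [IsProbabilityMeasure μ] [IsProbabilityMeasure ν]
    (am ap bm bp : ℝ)
    (ham : 0 < am) (ha : am ≤ ap) (hap : ap ≤ 1)
    (hbm : 0 < bm) (hb : bm ≤ bp) (hbp : bp ≤ 1)
    (hsuppμ : ∀ᵐ α ∂μ, α ∈ Set.Icc am ap)
    (hsuppν : ∀ᵐ β ∂ν, β ∈ Set.Icc bm bp)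
    (p q : ℕ → ℝ)
    (hp : ∀ n, p n = ∫ α, Real.exp (-α) * α ^ n / (Nat.factorial n) ∂μ)
    (hq : ∀ n, q n = ∫ β, Real.exp (-β) * β ^ n / (Nat.factorial n) ∂ν) :
    Real.exp (-(ap + bp) / 2) +
      Real.exp (-(am + bm) / 2) * (Real.exp (Real.sqrt (am * bm)) - 1) ≤
    ∑' n, Real.sqrt (p n * q n) :=
  mixed_poisson_bhattacharyya_lower_bound_general μ ν am ap bm bp ham hap hbm hbp hsuppμ hsuppν p q
    hp hq
end
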